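/- arXiv:2310.00286 — 2 statements merged into one kernel-verified Lean document; each statement's English description precedes it below -/
import Mathlib

section
/- Let 0 ≤ m₂ < m₂' ≤ 1, and suppose y > 0 satisfies (1 − m₂)/(y² + 1)^{3/2} + m₂/y³ = (1 + 7m₂)/8 and y' > 0 satisfies (1 − m₂')/(y'² + 1)^{3/2} + m₂'/y'³ = (1 + 7m₂')/8. Then y' < y. -/
/-!
Write the constraint as `L(m, y) = (1 + 7m)/8`. For fixed `m ∈ [0, 1]`, `L(m, ·)` is decreasing
in `y`, and `L` is affine in `m` with slope `1/y³ - 1/(y² + 1)^{3/2}`. At any solution this slope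
is below `7/8`, the slope of the right-hand side: if `y² < 3` the constraint itself forces it,
and if `y² ≥ 3` then `1/y³ < 7/8`. So if `y ≤ y'`, then
`(1 + 7m')/8 = L(m', y') ≤ L(m', y) < (1 + 7m)/8 + 7(m' - m)/8 = (1 + 7m')/8`.
-/

open Real Set

noncomputable def constraintLHS (m y : ℝ) : ℝ :=
  (1 - m) / (y ^ 2 + 1) ^ ((3 : ℝ) / 2) + m / y ^ 3

lemma four_rpow_three_halves : (4 : ℝ) ^ ((3 : ℝ) / 2) = 8 := by
  rw [show (4 : ℝ) = 2 ^ (2 : ℝ) by norm_num, ← rpow_mul (by norm_num)]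
  norm_num

lemma constraintLHS_antitoneOn {m : ℝ} (hm0 : 0 ≤ m) (hm1 : m ≤ 1) :
    AntitoneOn (constraintLHS m) (Ioi 0) := by
  intro y (hy : 0 < y) y' _ hyy'
  unfold constraintLHS
  gcongr

lemma constraintLHS_sub (m m' y : ℝ) :
    constraintLHS m' y - constraintLHS m y
      = (m' - m) * (1 / y ^ 3 - 1 / (y ^ 2 + 1) ^ ((3 : ℝ) / 2)) := by
  unfold constraintLHS
  ring

lemma inv_pow_sub_lt_of_constraint {m y : ℝ} (hm : 0 ≤ m) (hy : 0 < y)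
    (h : constraintLHS m y = (1 + 7 * m) / 8) :
    1 / y ^ 3 - 1 / (y ^ 2 + 1) ^ ((3 : ℝ) / 2) < 7 / 8 := by
  set Y := (y ^ 2 + 1) ^ ((3 : ℝ) / 2)
  have hYpos : 0 < Y := by positivity
  rcases lt_or_ge (y ^ 2) 3 with hy2 | hy2
  · have hY : Y < 8 := by
      rw [← four_rpow_three_halves]
      exact rpow_lt_rpow (by positivity) (by linarith) (by norm_num)
    have h8 : 1 / 8 < 1 / Y := one_div_lt_one_div_of_lt hYpos hY
    have hsplit : 1 / Y - 1 / 8 + m * (1 / y ^ 3 - 1 / Y - 7 / 8) = 0 := by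
      unfold constraintLHS at h
      linear_combination h
    have hneg : m * (1 / y ^ 3 - 1 / Y - 7 / 8) < 0 := by linarith
    linarith [neg_of_mul_neg_right hneg hm]
  · have hy3 : 8 / 7 < y ^ 3 := by nlinarith
    have : 1 / y ^ 3 < 7 / 8 := by
      rw [div_lt_iff₀ (by positivity)]; linarith
    have : 0 < 1 / Y := by positivity
    linarith

theorem statement11_general (m₂ m₂' : ℝ) (h0 : 0 ≤ m₂) (hlt : m₂ < m₂') (h1 : m₂' ≤ 1)
    (y y' : ℝ) (hy : 0 < y)
    (heq : (1 - m₂) / (y ^ 2 + 1) ^ ((3 : ℝ) / 2) + m₂ / y ^ 3 = (1 + 7 * m₂) / 8)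
    (heq' : (1 - m₂') / (y' ^ 2 + 1) ^ ((3 : ℝ) / 2) + m₂' / y' ^ 3 = (1 + 7 * m₂') / 8) :
    y' < y := by
  by_contra! hyy'
  have hmono : constraintLHS m₂' y' ≤ constraintLHS m₂' y :=
    constraintLHS_antitoneOn (by linarith) h1 hy (hy.trans_le hyy') hyy'
  have hslope := mul_lt_mul_of_pos_left (inv_pow_sub_lt_of_constraint h0 hy heq) (sub_pos.2 hlt)
  have hdiff := constraintLHS_sub m₂ m₂' y
  change constraintLHS m₂ y = _ at heq
  change constraintLHS m₂' y' = _ at heq'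
  linarith

/-- the scaled height determined by the mass-constraint equation
`(1 − m₂)/(y² + 1)^{3/2} + m₂/y³ = (1 + 7m₂)/8` is strictly decreasing in `m₂`. -/
theorem statement11 (m₂ m₂' : ℝ) (h0 : 0 ≤ m₂) (hlt : m₂ < m₂') (h1 : m₂' ≤ 1)
    (y y' : ℝ) (hy : 0 < y) (hy' : 0 < y')
    (heq : (1 - m₂) / (y ^ 2 + 1) ^ ((3 : ℝ) / 2) + m₂ / y ^ 3 = (1 + 7 * m₂) / 8)
    (heq' : (1 - m₂') / (y' ^ 2 + 1) ^ ((3 : ℝ) / 2) + m₂' / y' ^ 3 = (1 + 7 * m₂') / 8) :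
    y' < y :=
  statement11_general m₂ m₂' h0 hlt h1 y y' hy heq heq'
end

section
/- Let n ≥ 2 be an integer. For s ∈ (0, 1) define h_n(s) = (1/n)·∑_{j=1}^{n} (1 − s·cos(2jπ/n))/(1 + s² − 2s·cos(2jπ/n))^{3/2}, set h_n(1) = (1/(4n))·∑_{j=1}^{n−1} 1/sin(jπ/n), and define G_n(s) = (3(1 − s³)/(2n))·∑_{j=1}^{n} (1 + s²·cos(4jπ/n) − 2s·cos(2jπ/n))/(1 + s² − 2s·cos(2jπ/n))^{5/2} + (3/2)·(s³·h_n(s) − h_n(1)). Then the limit as s → 1 from the left of G_n(s)/(h_n(s) − h_n(1)) exists and equals 6. -/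
/-! Write `D_j(s) = 1 + s² − 2s·cos(2jπ/n)`. The term `j = n` of both sums is singular at `s = 1`:
there `D_n(s) = (1 − s)²`, so it equals `1/(1 − s)²` in `h_n` (up to the factor `1/n`) and
`1/(1 − s)³` in `G_n`, while all other terms are continuous at `s = 1`. Hence
`(1 − s)²(h_n(s) − h_n(1)) → 1/n`, and since `1 − s³ = (1 − s)(1 + s + s²)`,
`(1 − s)² G_n(s) → 9/(2n) + 3/(2n) = 6/n`. -/

open Real Filter Topology Finset

theorem Filter.Tendsto.div_of_mul_right {α K : Type*} [Field K] [TopologicalSpace K]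
    [ContinuousInv₀ K] [ContinuousMul K] {l : Filter α} {u v φ : α → K} {a b : K}
    (hφ : ∀ᶠ x in l, φ x ≠ 0) (hu : Tendsto (fun x => u x * φ x) l (𝓝 a))
    (hv : Tendsto (fun x => v x * φ x) l (𝓝 b)) (hb : b ≠ 0) :
    Tendsto (fun x => u x / v x) l (𝓝 (a / b)) := by
  refine (hu.div hv hb).congr' ?_
  filter_upwards [hφ] with x hx
  exact mul_div_mul_right _ _ hx

theorem Finset.sum_Icc_one_eq_add_sum_Icc_pred {M : Type*} [AddCommMonoid M] {n : ℕ}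
    (hn : 1 ≤ n) (f : ℕ → M) :
    ∑ j ∈ Icc 1 n, f j = f n + ∑ j ∈ Icc 1 (n - 1), f j := by
  obtain ⟨m, rfl⟩ := Nat.exists_eq_add_of_le' hn
  rw [Finset.sum_Icc_succ_top (by omega), add_comm, Nat.add_sub_cancel]

theorem Real.cos_two_mul_nat_mul_pi_div_lt_one {j n : ℕ} (hj : 0 < j) (hjn : j < n) :
    cos (2 * j * π / n) < 1 := by
  have hn : (0 : ℝ) < n := by exact_mod_cast hj.trans hjn
  have hpos : 0 < 2 * (j : ℝ) * π / n := by positivity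
  have hlt : 2 * (j : ℝ) * π / n < 2 * π := by
    rw [div_lt_iff₀ hn, mul_assoc, mul_assoc, mul_lt_mul_iff_right₀ two_pos, mul_comm,
      mul_lt_mul_iff_right₀ pi_pos]
    exact_mod_cast hjn
  refine (cos_le_one _).lt_of_ne fun h => ?_
  exact hpos.ne' ((cos_eq_one_iff_of_lt_of_lt (by linarith) hlt).mp h)

theorem Real.sq_rpow_natCast_div_two {x : ℝ} (hx : 0 ≤ x) (k : ℕ) :
    (x ^ 2) ^ ((k : ℝ) / 2) = x ^ k := by
  rw [← rpow_natCast x 2, ← rpow_mul hx, ← rpow_natCast x k]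
  congr 1
  push_cast
  ring

theorem continuousAt_div_rpow_of_cos_lt_one {f : ℝ → ℝ} {c : ℝ} (hc : c < 1)
    (hf : ContinuousAt f 1) (p : ℝ) :
    ContinuousAt (fun s => f s / (1 + s ^ 2 - 2 * s * c) ^ p) 1 := by
  have hD : (0 : ℝ) < 1 + 1 ^ 2 - 2 * 1 * c := by linarith
  exact hf.div ((by fun_prop : ContinuousAt (fun s : ℝ => 1 + s ^ 2 - 2 * s * c) 1).rpow_const
    (Or.inl hD.ne')) (rpow_pos_of_pos hD p).ne'

theorem tendsto_sum_Icc_mul_pow_of_singular_top_term {n k : ℕ} (hn : 1 ≤ n) (hk : 0 < k)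
    (f : ℕ → ℝ → ℝ) (hsing : ∀ s < 1, f n s * (1 - s) ^ k = 1)
    (hreg : ∀ j ∈ Icc 1 (n - 1), ContinuousAt (f j) 1) :
    Tendsto (fun s => (∑ j ∈ Icc 1 n, f j s) * (1 - s) ^ k) (𝓝[<] 1) (𝓝 1) := by
  have hsum : ContinuousAt (fun s => ∑ j ∈ Icc 1 (n - 1), f j s) 1 := tendsto_finsetSum _ hreg
  have hR : ContinuousAt (fun s => (∑ j ∈ Icc 1 (n - 1), f j s) * (1 - s) ^ k) 1 :=
    hsum.mul (by fun_prop)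
  have hlim : Tendsto (fun s => 1 + (∑ j ∈ Icc 1 (n - 1), f j s) * (1 - s) ^ k) (𝓝[<] 1)
      (𝓝 1) := by
    simpa only [sub_self, zero_pow hk.ne', mul_zero, add_zero] using
      (hR.tendsto.mono_left nhdsWithin_le_nhds).const_add 1
  refine hlim.congr' ?_
  filter_upwards [self_mem_nhdsWithin] with s hs
  rw [sum_Icc_one_eq_add_sum_Icc_pred hn, add_mul, hsing s hs]

section Kernels

variable {n : ℕ}

theorem cos_two_mul_self_mul_pi_div_self (hn : (n : ℝ) ≠ 0) : cos (2 * n * π / n) = 1 := by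
  rw [show 2 * (n : ℝ) * π / n = 2 * π by field_simp, cos_two_pi]

theorem cos_four_mul_self_mul_pi_div_self (hn : (n : ℝ) ≠ 0) : cos (4 * n * π / n) = 1 := by
  rw [show 4 * (n : ℝ) * π / n = (2 : ℕ) * (2 * π) by field_simp; norm_num, cos_nat_mul_two_pi]

theorem cos_two_mul_pi_div_lt_one_of_mem_Icc {j : ℕ} (hj : j ∈ Icc 1 (n - 1)) :
    cos (2 * j * π / n) < 1 := by
  rw [mem_Icc] at hj
  exact cos_two_mul_nat_mul_pi_div_lt_one (by omega) (by omega)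

theorem tendsto_sum_h_kernel_mul_sq (hn : 1 ≤ n) :
    Tendsto (fun s => (∑ j ∈ Icc 1 n, (1 - s * cos (2 * j * π / n)) /
        (1 + s ^ 2 - 2 * s * cos (2 * j * π / n)) ^ ((3 : ℝ) / 2)) * (1 - s) ^ 2)
      (𝓝[<] 1) (𝓝 1) := by
  have hn0 : (n : ℝ) ≠ 0 := by positivity
  refine tendsto_sum_Icc_mul_pow_of_singular_top_term hn two_pos _ (fun s hs => ?_)
    fun j hj => continuousAt_div_rpow_of_cos_lt_one
      (cos_two_mul_pi_div_lt_one_of_mem_Icc hj) (by fun_prop) _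
  have hs' : (0 : ℝ) < 1 - s := sub_pos.mpr hs
  have hpow := sq_rpow_natCast_div_two hs'.le 3
  rw [Nat.cast_ofNat] at hpow
  rw [cos_two_mul_self_mul_pi_div_self hn0, show 1 + s ^ 2 - 2 * s * 1 = (1 - s) ^ 2 by ring,
    hpow]
  field_simp

theorem tendsto_sum_G_kernel_mul_cube (hn : 1 ≤ n) :
    Tendsto (fun s => (∑ j ∈ Icc 1 n,
        (1 + s ^ 2 * cos (4 * j * π / n) - 2 * s * cos (2 * j * π / n)) /
          (1 + s ^ 2 - 2 * s * cos (2 * j * π / n)) ^ ((5 : ℝ) / 2)) * (1 - s) ^ 3)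
      (𝓝[<] 1) (𝓝 1) := by
  have hn0 : (n : ℝ) ≠ 0 := by positivity
  refine tendsto_sum_Icc_mul_pow_of_singular_top_term hn three_pos _ (fun s hs => ?_)
    fun j hj => continuousAt_div_rpow_of_cos_lt_one
      (cos_two_mul_pi_div_lt_one_of_mem_Icc hj) (by fun_prop) _
  have hs' : (0 : ℝ) < 1 - s := sub_pos.mpr hs
  have hpow := sq_rpow_natCast_div_two hs'.le 5
  rw [Nat.cast_ofNat] at hpow
  rw [cos_two_mul_self_mul_pi_div_self hn0, cos_four_mul_self_mul_pi_div_self hn0,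
    show 1 + s ^ 2 * 1 - 2 * s * 1 = (1 - s) ^ 2 by ring,
    show 1 + s ^ 2 - 2 * s * 1 = (1 - s) ^ 2 by ring, hpow]
  field_simp

end Kernels

section Poles

variable {n : ℝ} {S T : ℝ → ℝ}

theorem tendsto_one_sub_sq_nhdsLT_one : Tendsto (fun s : ℝ => (1 - s) ^ 2) (𝓝[<] 1) (𝓝 0) := by
  have hc : Continuous fun s : ℝ => (1 - s) ^ 2 := by fun_prop
  exact (hc.tendsto' 1 0 (by norm_num)).mono_left nhdsWithin_le_nhds

theorem tendsto_sub_const_mul_one_sub_sq (c : ℝ)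
    (hS : Tendsto (fun s => S s * (1 - s) ^ 2) (𝓝[<] 1) (𝓝 1)) :
    Tendsto (fun s => (1 / n * S s - c) * (1 - s) ^ 2) (𝓝[<] 1) (𝓝 (1 / n)) := by
  have := (hS.const_mul (1 / n)).sub (tendsto_one_sub_sq_nhdsLT_one.const_mul c)
  rw [mul_one, mul_zero, sub_zero] at this
  exact this.congr fun s => by ring

theorem tendsto_G_form_mul_one_sub_sq (hn : n ≠ 0) (c : ℝ)
    (hS : Tendsto (fun s => S s * (1 - s) ^ 2) (𝓝[<] 1) (𝓝 1))
    (hT : Tendsto (fun s => T s * (1 - s) ^ 3) (𝓝[<] 1) (𝓝 1)) :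
    Tendsto (fun s => (3 * (1 - s ^ 3) / (2 * n) * T s + 3 / 2 * (s ^ 3 * (1 / n * S s) - c))
      * (1 - s) ^ 2) (𝓝[<] 1) (𝓝 (6 / n)) := by
  have hpoly : Tendsto (fun s : ℝ => 3 * (1 + s + s ^ 2) / (2 * n)) (𝓝[<] 1)
      (𝓝 (3 * (1 + 1 + 1 ^ 2) / (2 * n))) :=
    tendsto_nhdsWithin_of_tendsto_nhds (Continuous.tendsto (by fun_prop) 1)
  have hcube : Tendsto (fun s : ℝ => s ^ 3) (𝓝[<] 1) (𝓝 (1 ^ 3)) :=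
    tendsto_nhdsWithin_of_tendsto_nhds ((continuous_pow 3).tendsto 1)
  have := (hpoly.mul hT).add (((hcube.mul (hS.const_mul (1 / n))).sub
    (tendsto_one_sub_sq_nhdsLT_one.const_mul c)).const_mul (3 / 2))
  -- `1 - s³ = (1 - s)(1 + s + s²)` turns the triple pole of `T` into a double one.
  convert this using 2 with s
  · ring
  · field_simp
    norm_num

theorem tendsto_G_form_div_sub_const (hn : n ≠ 0) (c : ℝ)
    (hS : Tendsto (fun s => S s * (1 - s) ^ 2) (𝓝[<] 1) (𝓝 1))
    (hT : Tendsto (fun s => T s * (1 - s) ^ 3) (𝓝[<] 1) (𝓝 1)) :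
    Tendsto (fun s => (3 * (1 - s ^ 3) / (2 * n) * T s + 3 / 2 * (s ^ 3 * (1 / n * S s) - c))
      / (1 / n * S s - c)) (𝓝[<] 1) (𝓝 6) := by
  have hφ : ∀ᶠ s in 𝓝[<] (1 : ℝ), (1 - s) ^ 2 ≠ 0 := by
    filter_upwards [self_mem_nhdsWithin] with s hs
    exact pow_ne_zero 2 (sub_pos.mpr hs).ne'
  convert (tendsto_G_form_mul_one_sub_sq hn c hS hT).div_of_mul_right hφ
    (tendsto_sub_const_mul_one_sub_sq c hS) (by simpa using hn) using 2
  field_simp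

end Poles

theorem statement18_general (n : ℕ) (hn : 2 ≤ n)
    (h G : ℝ → ℝ)
    (hh : h = fun s => (1 / (n : ℝ)) * ∑ j ∈ Finset.Icc 1 n,
        (1 - s * Real.cos (2 * j * Real.pi / n)) /
          (1 + s ^ 2 - 2 * s * Real.cos (2 * j * Real.pi / n)) ^ ((3 : ℝ) / 2))
    (h1 : ℝ)
    (hG : G = fun s => (3 * (1 - s ^ 3) / (2 * (n : ℝ))) * ∑ j ∈ Finset.Icc 1 n,
        (1 + s ^ 2 * Real.cos (4 * j * Real.pi / n) - 2 * s * Real.cos (2 * j * Real.pi / n)) /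
          (1 + s ^ 2 - 2 * s * Real.cos (2 * j * Real.pi / n)) ^ ((5 : ℝ) / 2)
      + (3 / 2) * (s ^ 3 * h s - h1)) :
    Filter.Tendsto (fun s => G s / (h s - h1))
      (nhdsWithin 1 (Set.Iio 1)) (nhds 6) := by
  have hn1 : 1 ≤ n := by omega
  subst hh hG
  exact tendsto_G_form_div_sub_const (by positivity) h1 (tendsto_sum_h_kernel_mul_sq hn1)
    (tendsto_sum_G_kernel_mul_cube hn1)

/-- with
`h_n(s) = (1/n)∑_{j=1}^{n} (1 − s·cos(2jπ/n))/(1 + s² − 2s·cos(2jπ/n))^{3/2}`,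
`h_n(1) = (1/(4n))∑_{j=1}^{n−1} 1/sin(jπ/n)` and
`G_n(s) = (3(1 − s³)/(2n))∑_{j=1}^{n} (1 + s²cos(4jπ/n) − 2s·cos(2jπ/n))/(1 + s² − 2s·cos(2jπ/n))^{5/2} + (3/2)(s³h_n(s) − h_n(1))`,
the limit of `G_n(s)/(h_n(s) − h_n(1))` as `s → 1⁻` exists and equals `6`. -/
theorem statement18 (n : ℕ) (hn : 2 ≤ n)
    (h G : ℝ → ℝ)
    (hh : h = fun s => (1 / (n : ℝ)) * ∑ j ∈ Finset.Icc 1 n,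
        (1 - s * Real.cos (2 * j * Real.pi / n)) /
          (1 + s ^ 2 - 2 * s * Real.cos (2 * j * Real.pi / n)) ^ ((3 : ℝ) / 2))
    (h1 : ℝ)
    (hh1 : h1 = (1 / (4 * (n : ℝ))) * ∑ j ∈ Finset.Icc 1 (n - 1),
        1 / Real.sin (j * Real.pi / n))
    (hG : G = fun s => (3 * (1 - s ^ 3) / (2 * (n : ℝ))) * ∑ j ∈ Finset.Icc 1 n,
        (1 + s ^ 2 * Real.cos (4 * j * Real.pi / n) - 2 * s * Real.cos (2 * j * Real.pi / n)) /
          (1 + s ^ 2 - 2 * s * Real.cos (2 * j * Real.pi / n)) ^ ((5 : ℝ) / 2)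
      + (3 / 2) * (s ^ 3 * h s - h1)) :
    Filter.Tendsto (fun s => G s / (h s - h1))
      (nhdsWithin 1 (Set.Iio 1)) (nhds 6) :=
  statement18_general n hn h G hh h1 hG
end
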